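/- (Core construction underlying the near-tightness of Theorem 2, cf. Proposition C.1: greedy planning with a β-accurate optimal-value oracle can lose β per step.) For every real β ≥ 0 and every integer H ≥ 1, there exist a nonempty finite state space S, a deterministic MDP (T, R) on S with action space A = Bool, a state s_0 ∈ S, a function V̂ : ℕ → S → ℝ with V*(h,s) ≥ V̂(h,s) ≥ V*(h,s) − β for all h ≤ H and all s ∈ S, and actions a_0, …, a_{H−1} ∈ A with s_{h+1} = T(s_h, a_h), such that each a_h attains the maximum over a ∈ A of R(s_h, a) + V̂(H−h−1, T(s_h, a)), and yet Σ_{h<H} R(s_h, a_h) ≤ V*(H, s_0) − β·H. Moreover the construction can be taken with nonnegative rewards, and if additionally β·H ≤ 1 it can be taken so that V*(h, s) ≤ 1 for all h ≤ H and all s ∈ S. -/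

import Mathlib

/-!
Let the action choose the next state (`T s b = b`) and pay `β` for `true`, `0` for `false`.
Then `V*(h, s) = β h` everywhere, and the oracle `V̂(h, s) = β h - β·[s = true]` is `β`-accurate.
It exactly cancels the reward of `true`, so the greedy rule is indifferent between the two
actions at every step; breaking ties towards `false` collects nothing, losing `β` per step.
-/

open scoped BigOperators

/-- The `h`-step value of a stationary deterministic policy `π` in the deterministic MDP
with transition function `T` and reward function `R`. -/
noncomputable def detVal {S A : Type*} (T : S → A → S) (R : S → A → ℝ)
    (π : S → A) : ℕ → S → ℝ
  | 0, _ => 0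
  | h + 1, s => R s (π s) + detVal T R π h (T s (π s))

/-- The `h`-step optimal value in the deterministic MDP `(T, R)`. -/
noncomputable def detOptVal {S A : Type*} [Fintype A] [Nonempty A]
    (T : S → A → S) (R : S → A → ℝ) : ℕ → S → ℝ
  | 0, _ => 0
  | h + 1, s => ⨆ a : A, (R s a + detOptVal T R h (T s a))

theorem ciSup_bool_eq {α : Type*} [ConditionallyCompleteLattice α] (f : Bool → α) :
    ⨆ b : Bool, f b = f true ⊔ f false := by
  have hf : BddAbove (Set.range f) := (Set.finite_range f).bddAbove
  refine le_antisymm (ciSup_le fun b => ?_) (sup_le (le_ciSup hf true) (le_ciSup hf false))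
  cases b
  · exact le_sup_right
  · exact le_sup_left

theorem detOptVal_of_action_reward {S A : Type*} [Fintype A] [Nonempty A]
    (T : S → A → S) (r : A → ℝ) (h : ℕ) (x : S) :
    detOptVal T (fun _ a => r a) h x = h * ⨆ a, r a := by
  induction h generalizing x with
  | zero => simp [detOptVal]
  | succ h ih =>
    have hr : BddAbove (Set.range r) := (Set.finite_range r).bddAbove
    simp only [detOptVal, ih, ← ciSup_add hr, Nat.cast_succ]
    ring

theorem greedy_with_beta_oracle_loses_beta_per_step_general
    (β : ℝ) (hβ : 0 ≤ β) (H : ℕ) :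
    ∃ (S : Type) (_ : Fintype S) (_ : Nonempty S)
      (T : S → Bool → S) (R : S → Bool → ℝ) (s0 : S)
      (Vhat : ℕ → S → ℝ) (s : ℕ → S) (a : ℕ → Bool),
      (∀ x : S, ∀ b : Bool, 0 ≤ R x b) ∧
      (∀ h : ℕ, h ≤ H → ∀ x : S,
        Vhat h x ≤ detOptVal T R h x ∧ detOptVal T R h x - β ≤ Vhat h x) ∧
      s 0 = s0 ∧
      (∀ h : ℕ, h < H → s (h + 1) = T (s h) (a h)) ∧
      (∀ h : ℕ, h < H → ∀ b : Bool,
        R (s h) b + Vhat (H - h - 1) (T (s h) b) ≤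
          R (s h) (a h) + Vhat (H - h - 1) (T (s h) (a h))) ∧
      (∑ h ∈ Finset.range H, R (s h) (a h)) ≤ detOptVal T R H s0 - β * H ∧
      (β * H ≤ 1 → ∀ h : ℕ, h ≤ H → ∀ x : S, detOptVal T R h x ≤ 1) := by
  set r : Bool → ℝ := fun b => if b then β else 0
  have hr : ∀ b, 0 ≤ r b := fun b => by cases b <;> simp [r, hβ]
  have hopt : ∀ h x, detOptVal (fun _ b => b) (fun _ b => r b) h x = β * h := fun h x => by
    rw [detOptVal_of_action_reward, ciSup_bool_eq]
    exact (congrArg _ (max_eq_left hβ)).trans (mul_comm _ _)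
  refine ⟨Bool, inferInstance, inferInstance, fun _ b => b, fun _ b => r b, false,
    fun h x => β * h - r x, fun _ => false, fun _ => false,
    fun _ => hr, fun h _ x => ?_, rfl, fun _ _ => rfl, fun _ _ b => ?_, ?_, ?_⟩
  · rw [hopt]
    cases x <;> simp [r, hβ]
  · cases b <;> simp [r]
  · simp [hopt, r]
  · intro hβH h hh x
    rw [hopt]
    calc β * h ≤ β * H := mul_le_mul_of_nonneg_left (by exact_mod_cast hh) hβ
      _ ≤ 1 := hβH

/-- **Core construction underlying the near-tightness of Theorem 2 (cf. Proposition C.1):**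
greedy planning with a `β`-accurate optimal-value oracle can lose `β` at every step.
For every `β ≥ 0` and `H ≥ 1` there is a deterministic MDP with boolean actions and
nonnegative rewards, a `β`-accurate optimal-value oracle `V̂`, and a greedy path w.r.t.
`V̂` whose cumulative reward falls short of the optimal value `V*(H, s_0)` by `β·H`;
moreover if `β·H ≤ 1` the construction also has all optimal values at most `1`. -/
theorem greedy_with_beta_oracle_loses_beta_per_step
    (β : ℝ) (hβ : 0 ≤ β) (H : ℕ) (hH : 1 ≤ H) :
    ∃ (S : Type) (_ : Fintype S) (_ : Nonempty S)
      (T : S → Bool → S) (R : S → Bool → ℝ) (s0 : S)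
      (Vhat : ℕ → S → ℝ) (s : ℕ → S) (a : ℕ → Bool),
      (∀ x : S, ∀ b : Bool, 0 ≤ R x b) ∧
      (∀ h : ℕ, h ≤ H → ∀ x : S,
        Vhat h x ≤ detOptVal T R h x ∧ detOptVal T R h x - β ≤ Vhat h x) ∧
      s 0 = s0 ∧
      (∀ h : ℕ, h < H → s (h + 1) = T (s h) (a h)) ∧
      (∀ h : ℕ, h < H → ∀ b : Bool,
        R (s h) b + Vhat (H - h - 1) (T (s h) b) ≤
          R (s h) (a h) + Vhat (H - h - 1) (T (s h) (a h))) ∧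
      (∑ h ∈ Finset.range H, R (s h) (a h)) ≤ detOptVal T R H s0 - β * H ∧
      (β * H ≤ 1 → ∀ h : ℕ, h ≤ H → ∀ x : S, detOptVal T R h x ≤ 1) :=
  greedy_with_beta_oracle_loses_beta_per_step_general β hβ H
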